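/- If m is even and n = 2m, then there does not exist a maximal pair of orthogonal binary frequency squares of order n; that is, for any two orthogonal binary frequency squares F_1, F_2 of type (n;m), there exists a binary frequency square F of type (n;m) orthogonal to both F_1 and F_2. -/

import Mathlib

/-- A binary frequency square of type `(n;m)` with `n = 2m`. -/
def IsBinFS {n : ℕ} (m : ℕ) (F : Fin n → Fin n → Fin 2) : Prop :=
  (∀ i : Fin n, ∀ s : Fin 2, (Finset.univ.filter fun j => F i j = s).card = m) ∧
  (∀ j : Fin n, ∀ s : Fin 2, (Finset.univ.filter fun i => F i j = s).card = m)

/-- Orthogonality: every ordered pair of symbols occurs `m²` times. -/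
def OrthBin {n : ℕ} (m : ℕ) (F G : Fin n → Fin n → Fin 2) : Prop :=
  ∀ a b : Fin 2,
    (Finset.univ.filter fun x : Fin n × Fin n => F x.1 x.2 = a ∧ G x.1 x.2 = b).card = m ^ 2
/-!
Inside every row pair up the cells that carry the same symbol of `F₂`, and inside every column
the cells that carry the same symbol of `F₁`; this is possible because every symbol occurs `m`
times, an even number. The two pairings are fixed-point-free involutions `L` and `R` of the
cells, and their union is a disjoint union of even cycles, so the cells can be coloured with
`0` and `1` such that paired cells get different colours. This colouring splits every row class
of `F₂` and every column class of `F₁` exactly in half, which is orthogonality to both squares.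
-/

open Finset Function

theorem exists_involutive_ne_of_even_card {α : Type*} [Fintype α] (h : Even (Fintype.card α)) :
    ∃ τ : α → α, Involutive τ ∧ ∀ x, τ x ≠ x := by
  set e := Fintype.equivFin α
  refine ⟨e.symm ∘ Fin.rev ∘ e, fun x => by simp, fun x hx => ?_⟩
  have : Fin.rev (e x) = e x := by simpa [Equiv.symm_apply_eq] using hx
  rw [Fin.ext_iff, Fin.val_rev] at this
  have := (e x).isLt
  obtain ⟨k, hk⟩ := h
  omega

theorem exists_involutive_ne_fiberwise {α β : Type*} [Fintype α] [DecidableEq β] (v : α → β)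
    (h : ∀ b, Even (Fintype.card {x // v x = b})) :
    ∃ π : α → α, Involutive π ∧ (∀ x, π x ≠ x) ∧ ∀ x, v (π x) = v x := by
  choose τ hτ hτ_ne using fun b => exists_involutive_ne_of_even_card (h b)
  set e := Equiv.sigmaFiberEquiv v
  let S : (Σ b, {x // v x = b}) → (Σ b, {x // v x = b}) := fun p => ⟨p.1, τ p.1 p.2⟩
  have hS : Involutive S := fun p => Sigma.ext rfl (heq_of_eq (hτ _ _))
  refine ⟨e ∘ S ∘ e.symm, fun x => ?_, fun x hx => ?_, fun x => (S (e.symm x)).2.2⟩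
  · simp only [comp_apply, Equiv.symm_apply_apply, hS _, Equiv.apply_symm_apply]
  · rw [comp_apply, comp_apply, ← Equiv.eq_symm_apply] at hx
    exact hτ_ne _ _ (eq_of_heq (Sigma.ext_iff.mp hx).2)

theorem exists_fin_two_coloring_of_involutive {Q : Type*} {φ : Q → Q} (hφ : Involutive φ)
    (hφ_ne : ∀ q, φ q ≠ q) : ∃ c : Q → Fin 2, ∀ q, c (φ q) ≠ c q := by
  let _ := IsWellOrder.linearOrder (WellOrderingRel (α := Q))
  refine ⟨fun q => if q < φ q then 0 else 1, fun q => ?_⟩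
  rcases (hφ_ne q).lt_or_gt with h | h
  · simp [h, h.not_gt, hφ q]
  · simp [hφ q, h, h.not_gt]

theorem semiconjBy_mul_inv_of_mul_self_eq_one {G : Type*} [Group G] {l r : G} (hl : l * l = 1)
    (hr : r * r = 1) : SemiconjBy l (l * r) (l * r)⁻¹ := by
  rw [SemiconjBy, mul_inv_rev, inv_eq_of_mul_eq_one_left hl, inv_eq_of_mul_eq_one_left hr,
    ← mul_assoc, hl, mul_assoc, hl, one_mul, mul_one]

theorem apply_zpow_apply_of_semiconjBy_inv {α : Type*} {l σ : Equiv.Perm α}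
    (h : SemiconjBy l σ σ⁻¹) (t : ℤ) (x : α) : l ((σ ^ t) x) = (σ ^ (-t)) (l x) := by
  rw [zpow_neg, ← inv_zpow]
  exact congrFun (congrArg DFunLike.coe (h.zpow_right t)) x

/-- If `(l * r) ^ t` sent `x` to `l x`, then `(l * r) ^ u` with `t = 2u` or `t = 2u + 1` would send
`x` to a fixed point of `l` or of `r` respectively. -/
theorem not_sameCycle_mul_apply_self {α : Type*} {l r : Equiv.Perm α} (hl : l * l = 1)
    (hr : r * r = 1) (hl_ne : ∀ x, l x ≠ x) (hr_ne : ∀ x, r x ≠ x) (x : α) :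
    ¬ (l * r).SameCycle x (l x) := by
  set σ := l * r
  have hlσ := apply_zpow_apply_of_semiconjBy_inv (semiconjBy_mul_inv_of_mul_self_eq_one hl hr)
  have hrl : ∀ y, r y = l (σ y) := fun y => by
    rw [← Equiv.Perm.mul_apply, ← mul_assoc, hl, one_mul]
  rintro ⟨t, ht⟩
  rcases Int.even_or_odd' t with ⟨u, rfl | rfl⟩
  · apply hl_ne ((σ ^ u) x)
    rw [hlσ, ← ht, ← Equiv.Perm.mul_apply, ← zpow_add]
    congr 2; ring
  · apply hr_ne ((σ ^ u) x)
    rw [hrl, ← Equiv.Perm.mul_apply σ, ← zpow_one_add, hlσ, ← ht, ← Equiv.Perm.mul_apply,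
      ← zpow_add]
    congr 2; ring

/-- `L` conjugates `σ = L * R` to `σ⁻¹`, hence permutes the `σ`-cycles without fixing any of
them; colour the cycles so that `L` swaps colours. Since `R = L * σ`, `R` swaps them too. -/
theorem exists_fin_two_coloring_of_involutive_pair {α : Type*} {L R : α → α}
    (hL : Involutive L) (hR : Involutive R) (hL_ne : ∀ x, L x ≠ x) (hR_ne : ∀ x, R x ≠ x) :
    ∃ c : α → Fin 2, ∀ x, c (L x) ≠ c x ∧ c (R x) ≠ c x := by
  set l := hL.toPerm L
  set r := hR.toPerm R
  have hl : l * l = 1 := Equiv.ext hL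
  have hr : r * r = 1 := Equiv.ext hR
  set σ := l * r
  have hlσ := apply_zpow_apply_of_semiconjBy_inv (semiconjBy_mul_inv_of_mul_self_eq_one hl hr)
  let cycles := Equiv.Perm.SameCycle.setoid σ
  let φ : Quotient cycles → Quotient cycles :=
    Quotient.map L fun x y ⟨t, ht⟩ => ⟨-t, ht ▸ (hlσ t x).symm⟩
  have hφ : Involutive φ := by
    rintro ⟨x⟩
    exact congrArg _ (hL x)
  have hφ_ne : ∀ q, φ q ≠ q := by
    rintro ⟨x⟩ h
    exact not_sameCycle_mul_apply_self hl hr hL_ne hR_ne x (Quotient.exact h).symm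
  obtain ⟨d, hd⟩ := exists_fin_two_coloring_of_involutive hφ hφ_ne
  refine ⟨fun x => d ⟦x⟧, fun x => ⟨hd ⟦x⟧, ?_⟩⟩
  have hRx : R x = L (σ x) := (hL (R x)).symm
  have hσx : (⟦σ x⟧ : Quotient cycles) = ⟦x⟧ :=
    Quotient.sound (Equiv.Perm.SameCycle.refl σ x).apply_left
  show d ⟦R x⟧ ≠ d ⟦x⟧
  rw [hRx, ← hσx]
  exact hd ⟦σ x⟧

theorem two_mul_card_filter_eq_card {α : Type*} {s : Finset α} {π : α → α}
    (hπ : Involutive π) (hs : ∀ x ∈ s, π x ∈ s) {c : α → Fin 2} (hc : ∀ x, c (π x) ≠ c x)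
    (b : Fin 2) :
    2 * #{x ∈ s | c x = b} = #s := by
  have hswap : #{x ∈ s | c x = b} = #{x ∈ s | ¬c x = b} := by
    refine card_nbij' π π ?_ ?_ (fun x _ => hπ x) (fun x _ => hπ x) <;>
      · intro x hx
        simp only [coe_filter, Set.mem_ofPred_eq] at hx ⊢
        have := hc x
        exact ⟨hs x hx.1, by omega⟩
  have := card_filter_add_card_filter_not (s := s) (fun x => c x = b)
  omega

theorem two_mul_card_filter_and_eq {α β : Type*} [Fintype α] [DecidableEq β] {π : α → α}
    (hπ : Involutive π) {v : α → β} (hv : ∀ x, v (π x) = v x) {c : α → Fin 2}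
    (hc : ∀ x, c (π x) ≠ c x) (a : β) (b : Fin 2) :
    2 * #{x | v x = a ∧ c x = b} = #{x | v x = a} := by
  rw [← filter_filter]
  exact two_mul_card_filter_eq_card hπ (by simp [hv]) hc b

theorem OrthBin.of_rows {m : ℕ} {F G : Fin (2 * m) → Fin (2 * m) → Fin 2}
    (h : ∀ i a b, 2 * #{j | F i j = a ∧ G i j = b} = m) : OrthBin m F G := by
  intro a b
  have hsum : #{x : Fin (2 * m) × Fin (2 * m) | F x.1 x.2 = a ∧ G x.1 x.2 = b} =
      ∑ i, #{j | F i j = a ∧ G i j = b} := by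
    simp only [card_filter, Fintype.sum_prod_type]
  refine Nat.eq_of_mul_eq_mul_left two_pos ?_
  rw [hsum, mul_sum]
  simp only [h, sum_const, card_univ, Fintype.card_fin, smul_eq_mul]
  ring

theorem OrthBin.of_cols {m : ℕ} {F G : Fin (2 * m) → Fin (2 * m) → Fin 2}
    (h : ∀ j a b, 2 * #{i | F i j = a ∧ G i j = b} = m) : OrthBin m F G := by
  intro a b
  have hsum : #{x : Fin (2 * m) × Fin (2 * m) | F x.1 x.2 = a ∧ G x.1 x.2 = b} =
      ∑ j, #{i | F i j = a ∧ G i j = b} := by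
    simp only [card_filter, Fintype.sum_prod_type_right]
  refine Nat.eq_of_mul_eq_mul_left two_pos ?_
  rw [hsum, mul_sum]
  simp only [h, sum_const, card_univ, Fintype.card_fin, smul_eq_mul]
  ring

theorem stmt17_general (m : ℕ) (hm : Even m)
    (F₁ F₂ : Fin (2 * m) → Fin (2 * m) → Fin 2)
    (h₁ : IsBinFS m F₁) (h₂ : IsBinFS m F₂) :
    ∃ F : Fin (2 * m) → Fin (2 * m) → Fin 2,
      IsBinFS m F ∧ OrthBin m F₁ F ∧ OrthBin m F₂ F := by
  choose π hπ hπ_ne hπF₂ using fun i => exists_involutive_ne_fiberwise (F₂ i) fun a => by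
    rw [Fintype.card_subtype, h₂.1 i a]; exact hm
  choose ρ hρ hρ_ne hρF₁ using fun j => exists_involutive_ne_fiberwise (F₁ · j) fun a => by
    rw [Fintype.card_subtype, h₁.2 j a]; exact hm
  obtain ⟨c, hc⟩ := exists_fin_two_coloring_of_involutive_pair
    (L := fun x => (x.1, π x.1 x.2)) (R := fun x => (ρ x.2 x.1, x.2))
    (fun x => Prod.ext rfl (hπ x.1 x.2)) (fun x => Prod.ext (hρ x.2 x.1) rfl)
    (fun x h => hπ_ne x.1 x.2 (congrArg Prod.snd h))
    (fun x h => hρ_ne x.2 x.1 (congrArg Prod.fst h))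
  refine ⟨fun i j => c (i, j), ⟨fun i b => ?_, fun j b => ?_⟩,
    .of_cols fun j a b => ?_, .of_rows fun i a b => ?_⟩
  · show #{j | c (i, j) = b} = m
    have := two_mul_card_filter_eq_card (s := univ) (c := fun j => c (i, j)) (hπ i)
      (fun _ _ => mem_univ _) (fun j => (hc (i, j)).1) b
    rw [card_univ, Fintype.card_fin] at this
    omega
  · show #{i | c (i, j) = b} = m
    have := two_mul_card_filter_eq_card (s := univ) (c := fun i => c (i, j)) (hρ j)
      (fun _ _ => mem_univ _) (fun i => (hc (i, j)).2) b
    rw [card_univ, Fintype.card_fin] at this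
    omega
  · rw [two_mul_card_filter_and_eq (hρ j) (hρF₁ j) (fun i => (hc (i, j)).2), h₁.2 j a]
  · rw [two_mul_card_filter_and_eq (hπ i) (hπF₂ i) (fun j => (hc (i, j)).1), h₂.1 i a]

/-- Theorem `t:main`: for even `m` there is no maximal pair of orthogonal binary
frequency squares of order `n = 2m`: every orthogonal pair has a common
orthogonal mate. -/
theorem stmt17 (m : ℕ) (hm : Even m)
    (F₁ F₂ : Fin (2 * m) → Fin (2 * m) → Fin 2)
    (h₁ : IsBinFS m F₁) (h₂ : IsBinFS m F₂) (h₁₂ : OrthBin m F₁ F₂) :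
    ∃ F : Fin (2 * m) → Fin (2 * m) → Fin 2,
      IsBinFS m F ∧ OrthBin m F₁ F ∧ OrthBin m F₂ F :=
  stmt17_general m hm F₁ F₂ h₁ h₂
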